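/- arXiv:1904.04828 — 4 statements merged into one kernel-verified Lean document; each statement's English description precedes it below -/
import Mathlib

section
/- Let A and B be finite nonempty sets, and let p and q be probability distributions on A × B whose marginal distributions on B are strictly positive at every b ∈ B. Let S = {(a,b) ∈ A × B : p(a|b) > 2·q(a|b)}. Then p(S) ≤ 2·Σ_{(a,b) ∈ A×B} |p(a,b) − q(a,b)|. -/
open Finset

/-!
Let `r(a,b) = q(a|b) p(b)` be the distribution with the `B`-marginal of `p` and the conditionals
of `q`. On `S` we have `p > 2r`, hence `p < 2(p - r)`, so `p(S) ≤ 2 (p - r)(S) ≤ ‖p - r‖₁`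
because `p` and `r` have the same total mass. Finally `‖q - r‖₁ = ‖q_B - p_B‖₁ ≤ ‖q - p‖₁`, so the
triangle inequality gives `‖p - r‖₁ ≤ 2 ‖p - q‖₁`.
-/

lemma two_mul_sum_sub_le_sum_abs_sub {ι : Type*} [Fintype ι] (f g : ι → ℝ)
    (hfg : ∑ i, f i = ∑ i, g i) (s : Finset ι) :
    2 * ∑ i ∈ s, (f i - g i) ≤ ∑ i, |f i - g i| := by
  have two_mul_posPart (x : ℝ) : 2 * x⁺ = |x| + x := by
    linarith [posPart_add_negPart x, posPart_sub_negPart x]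
  have hsub : ∑ i, (f i - g i) = 0 := by rw [sum_sub_distrib, hfg, sub_self]
  calc 2 * ∑ i ∈ s, (f i - g i)
      ≤ 2 * ∑ i, (f i - g i)⁺ := by
        gcongr
        exact (sum_le_sum fun i _ => le_posPart _).trans
          (sum_le_univ_sum_of_nonneg fun i => posPart_nonneg _)
    _ = ∑ i, |f i - g i| := by
        rw [mul_sum, sum_congr rfl fun i _ => two_mul_posPart _, sum_add_distrib, hsub, add_zero]

lemma sum_abs_sum_fst_le_sum_abs {A B : Type*} [Fintype A] [Fintype B] (f : A × B → ℝ) :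
    ∑ b, |∑ a, f (a, b)| ≤ ∑ x, |f x| := by
  rw [Fintype.sum_prod_type_right]
  exact sum_le_sum fun b _ => abs_sum_le_sum_abs _ _

section MarginalCompCond

variable {A B : Type*} [Fintype A]

noncomputable def marginalCompCond (p q : A × B → ℝ) (x : A × B) : ℝ :=
  q x / (∑ a, q (a, x.2)) * ∑ a, p (a, x.2)

variable {p q : A × B → ℝ}

lemma sum_fst_marginalCompCond (hqB : ∀ b, ∑ a, q (a, b) ≠ 0) (b : B) :
    ∑ a, marginalCompCond p q (a, b) = ∑ a, p (a, b) := by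
  simp only [marginalCompCond, ← sum_mul, ← sum_div, div_self (hqB b), one_mul]

lemma sum_marginalCompCond [Fintype B] (hqB : ∀ b, ∑ a, q (a, b) ≠ 0) :
    ∑ x, marginalCompCond p q x = ∑ x, p x := by
  simp only [Fintype.sum_prod_type_right, sum_fst_marginalCompCond hqB]

lemma sum_abs_sub_marginalCompCond_le [Fintype B] (hq0 : ∀ x, 0 ≤ q x)
    (hqB : ∀ b, 0 < ∑ a, q (a, b)) :
    ∑ x, |q x - marginalCompCond p q x| ≤ ∑ x, |q x - p x| := by
  have hfactor (x : A × B) : |q x - marginalCompCond p q x|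
      = q x / (∑ a, q (a, x.2)) * |∑ a, (q (a, x.2) - p (a, x.2))| := by
    have hsub : q x - marginalCompCond p q x
        = q x / (∑ a, q (a, x.2)) * ∑ a, (q (a, x.2) - p (a, x.2)) := by
      rw [sum_sub_distrib, marginalCompCond, mul_sub, div_mul_cancel₀ _ (hqB x.2).ne']
    rw [hsub, abs_mul, abs_of_nonneg (div_nonneg (hq0 x) (hqB x.2).le)]
  calc ∑ x, |q x - marginalCompCond p q x|
      = ∑ b, |∑ a, (q (a, b) - p (a, b))| := by
        simp only [Fintype.sum_prod_type_right, hfactor, ← sum_mul, ← sum_div,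
          div_self (hqB _).ne', one_mul]
    _ ≤ ∑ x, |q x - p x| := sum_abs_sum_fst_le_sum_abs fun x => q x - p x

lemma lt_two_mul_sub_marginalCompCond_of_cond_gt (hpB : ∀ b, 0 < ∑ a, p (a, b)) {x : A × B}
    (hx : p x / (∑ a, p (a, x.2)) > 2 * (q x / (∑ a, q (a, x.2)))) :
    p x < 2 * (p x - marginalCompCond p q x) := by
  have := (lt_div_iff₀ (hpB x.2)).mp hx
  rw [marginalCompCond]
  linarith

end MarginalCompCond

theorem reverse_pinsker_set_general {A B : Type*} [Fintype A] [Fintype B]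
    (p q : A × B → ℝ)
    (hq0 : ∀ x, 0 ≤ q x)
    (hpB : ∀ b : B, 0 < ∑ a, p (a, b)) (hqB : ∀ b : B, 0 < ∑ a, q (a, b)) :
    ∑ x ∈ Finset.univ.filter
        (fun x : A × B => p x / (∑ a, p (a, x.2)) > 2 * (q x / (∑ a, q (a, x.2)))), p x
      ≤ 2 * ∑ x, |p x - q x| := by
  set r := marginalCompCond p q
  have hmass : ∑ x, p x = ∑ x, r x := (sum_marginalCompCond fun b => (hqB b).ne').symm
  calc _ ≤ ∑ x ∈ _, 2 * (p x - r x) :=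
        sum_le_sum fun x hx =>
          (lt_two_mul_sub_marginalCompCond_of_cond_gt hpB (mem_filter.mp hx).2).le
    _ ≤ ∑ x, |p x - r x| := by rw [← mul_sum]; exact two_mul_sum_sub_le_sum_abs_sub p r hmass _
    _ ≤ ∑ x, (|p x - q x| + |q x - r x|) := sum_le_sum fun x _ => abs_sub_le _ _ _
    _ = ∑ x, |p x - q x| + ∑ x, |q x - r x| := sum_add_distrib
    _ ≤ ∑ x, |p x - q x| + ∑ x, |q x - p x| :=
        add_le_add_right (sum_abs_sub_marginalCompCond_le hq0 hqB) _
    _ = 2 * ∑ x, |p x - q x| := by simp only [abs_sub_comm (q _), two_mul]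

/-- **Reverse Pinsker (set form).** For probability distributions `p`, `q` on `A × B`
with strictly positive marginals on `B`, the `p`-probability of the set
`S = {(a,b) : p(a|b) > 2 q(a|b)}` is at most twice the ℓ1-distance between `p` and `q`. -/
theorem reverse_pinsker_set {A B : Type*} [Fintype A] [Fintype B] [Nonempty A] [Nonempty B]
    [DecidableEq A] [DecidableEq B]
    (p q : A × B → ℝ)
    (hp0 : ∀ x, 0 ≤ p x) (hq0 : ∀ x, 0 ≤ q x)
    (hp1 : ∑ x, p x = 1) (hq1 : ∑ x, q x = 1)
    (hpB : ∀ b : B, 0 < ∑ a, p (a, b)) (hqB : ∀ b : B, 0 < ∑ a, q (a, b)) :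
    ∑ x ∈ Finset.univ.filter
        (fun x : A × B => p x / (∑ a, p (a, x.2)) > 2 * (q x / (∑ a, q (a, x.2)))), p x
      ≤ 2 * ∑ x, |p x - q x| :=
  reverse_pinsker_set_general p q hq0 hpB hqB
end

section
/- Let A and B be finite nonempty sets, and let p and q be probability distributions on A × B whose marginal distributions on B are strictly positive at every b ∈ B, and with q(a,b) > 0 for every (a,b) ∈ A × B. Let M = max_{(a,b) ∈ A×B} log₂(p(a|b)/q(a|b)) taken over pairs with p(a,b) > 0, and assume M ≥ 0. Then Σ_{(a,b) : p(a,b) > 0} p(a,b)·log₂(p(a|b)/q(a|b)) ≤ 2·M·Σ_{(a,b) ∈ A×B} |p(a,b) − q(a,b)| + 1. -/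
open Finset

/-- **Reverse Pinsker (KL form).** For probability distributions `p`, `q` on `A × B` with
strictly positive marginals on `B` and `q` strictly positive, if `M` is the maximum over
pairs with `p(a,b) > 0` of `log₂(p(a|b)/q(a|b))` and `M ≥ 0`, then
`∑_{p(a,b)>0} p(a,b)·log₂(p(a|b)/q(a|b)) ≤ 2·M·‖p − q‖₁ + 1`. -/
theorem reverse_pinsker_kl {A B : Type*} [Fintype A] [Fintype B] [Nonempty A] [Nonempty B]
    (p q : A × B → ℝ)
    (hp0 : ∀ x, 0 ≤ p x) (hq0 : ∀ x, 0 < q x)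
    (hp1 : ∑ x, p x = 1) (hq1 : ∑ x, q x = 1)
    (hpB : ∀ b : B, 0 < ∑ a, p (a, b))
    (M : ℝ)
    (hM : IsGreatest
      {r : ℝ | ∃ x : A × B, 0 < p x ∧
        r = Real.logb 2 ((p x / (∑ a, p (a, x.2))) / (q x / (∑ a, q (a, x.2))))} M)
    (hM0 : 0 ≤ M) :
    ∑ x ∈ Finset.univ.filter (fun x : A × B => 0 < p x),
        p x * Real.logb 2 ((p x / (∑ a, p (a, x.2))) / (q x / (∑ a, q (a, x.2))))
      ≤ 2 * M * (∑ x, |p x - q x|) + 1 := by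
  classical
  have hqB : ∀ b : B, 0 < ∑ a, q (a, b) :=
    fun b => Finset.sum_pos (fun a _ => hq0 _) Finset.univ_nonempty
  set f : A × B → ℝ :=
    fun x => Real.logb 2 ((p x / (∑ a, p (a, x.2))) / (q x / (∑ a, q (a, x.2)))) with hfdef
  set r : A × B → ℝ := fun x => q x * (∑ a, p (a, x.2)) / (∑ a, q (a, x.2)) with hrdef
  have hfM : ∀ x, 0 < p x → f x ≤ M := fun x hx => hM.2 ⟨x, hx, rfl⟩
  -- r sums to 1
  have hr1 : ∑ x, r x = 1 := by
    rw [Fintype.sum_prod_type_right]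
    have hb : ∀ b : B, ∑ a, r (a, b) = ∑ a, p (a, b) := by
      intro b
      simp only [hrdef]
      rw [← Finset.sum_div, ← Finset.sum_mul, mul_comm, mul_div_assoc,
        div_self (hqB b).ne', mul_one]
    simp_rw [hb]
    rw [← Fintype.sum_prod_type_right, hp1]
  -- |p - r| bounded by 2 * ell1
  have habs : ∑ x, |p x - r x| ≤ 2 * ∑ x, |p x - q x| := by
    have hpt : ∀ x : A × B, |p x - r x| ≤ |p x - q x| + q x * |(∑ a, q (a, x.2)) - (∑ a, p (a, x.2))| / (∑ a, q (a, x.2)) := by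
      intro x
      have h1 : |p x - r x| ≤ |p x - q x| + |q x - r x| := by
        have := abs_sub_le (p x) (q x) (r x); linarith [this]
      have h2 : |q x - r x| = q x * |(∑ a, q (a, x.2)) - (∑ a, p (a, x.2))| / (∑ a, q (a, x.2)) := by
        have hq' : (0:ℝ) < ∑ a, q (a, x.2) := hqB _
        rw [hrdef]
        rw [show q x - q x * (∑ a, p (a, x.2)) / (∑ a, q (a, x.2))
            = q x * ((∑ a, q (a, x.2)) - (∑ a, p (a, x.2))) / (∑ a, q (a, x.2)) by
          field_simp]
        rw [abs_div, abs_mul, abs_of_nonneg (hq0 x).le, abs_of_pos hq']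
      linarith [h1, h2.le, h2.ge]
    calc ∑ x, |p x - r x|
        ≤ ∑ x, (|p x - q x| + q x * |(∑ a, q (a, x.2)) - (∑ a, p (a, x.2))| / (∑ a, q (a, x.2))) :=
          Finset.sum_le_sum (fun x _ => hpt x)
      _ = (∑ x, |p x - q x|) + ∑ x, q x * |(∑ a, q (a, x.2)) - (∑ a, p (a, x.2))| / (∑ a, q (a, x.2)) := by
          rw [Finset.sum_add_distrib]
      _ ≤ 2 * ∑ x, |p x - q x| := by
          have : ∑ x : A × B, q x * |(∑ a, q (a, x.2)) - (∑ a, p (a, x.2))| / (∑ a, q (a, x.2))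
              ≤ ∑ x : A × B, |p x - q x| := by
            rw [Fintype.sum_prod_type_right (f := fun x : A × B => q x * |(∑ a, q (a, x.2)) - (∑ a, p (a, x.2))| / (∑ a, q (a, x.2))),
                Fintype.sum_prod_type_right (f := fun x : A × B => |p x - q x|)]
            apply Finset.sum_le_sum
            intro b _
            have hq' : (0:ℝ) < ∑ a, q (a, b) := hqB b
            have hsum : ∑ a, q (a, b) * |(∑ a, q (a, b)) - (∑ a, p (a, b))| / (∑ a, q (a, b))
                = |(∑ a, q (a, b)) - (∑ a, p (a, b))| := by
              rw [← Finset.sum_div, ← Finset.sum_mul, mul_comm, mul_div_assoc,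
                div_self hq'.ne', mul_one]
            rw [hsum]
            calc |(∑ a, q (a, b)) - (∑ a, p (a, b))| = |∑ a, (q (a, b) - p (a, b))| := by
                  rw [Finset.sum_sub_distrib]
              _ ≤ ∑ a, |q (a, b) - p (a, b)| := Finset.abs_sum_le_sum_abs _ _
              _ = ∑ a, |p (a, b) - q (a, b)| := by simp_rw [abs_sub_comm]
          linarith
  -- split
  set T := Finset.univ.filter (fun x : A × B => 0 < p x) with hT
  set T2 := T.filter (fun x => 1 ≤ f x) with hT2
  set T1 := T.filter (fun x => ¬ 1 ≤ f x) with hT1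
  have hsplit : ∑ x ∈ T, p x * f x = ∑ x ∈ T2, p x * f x + ∑ x ∈ T1, p x * f x := by
    rw [hT2, hT1, Finset.sum_filter_add_sum_filter_not]
  -- T1 bound
  have hT1bound : ∑ x ∈ T1, p x * f x ≤ 1 := by
    calc ∑ x ∈ T1, p x * f x ≤ ∑ x ∈ T1, p x := by
          apply Finset.sum_le_sum
          intro x hx
          simp only [hT1, hT2, hT, Finset.mem_filter] at hx
          nlinarith [hx.1.2, hx.2]
      _ ≤ ∑ x, p x := Finset.sum_le_sum_of_subset_of_nonneg (Finset.filter_subset _ _ |>.trans (Finset.filter_subset _ _)) (fun x _ _ => hp0 x)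
      _ = 1 := hp1
  -- T2 pointwise: p x ≤ 2 * (p x - r x)
  have hkey : ∀ x ∈ T2, p x ≤ 2 * (p x - r x) := by
    intro x hx
    simp only [hT2, hT, Finset.mem_filter] at hx
    obtain ⟨⟨-, hpx⟩, hfx⟩ := hx
    have hpb := hpB x.2
    have hqb := hqB x.2
    have hratio : (0:ℝ) < (p x / (∑ a, p (a, x.2))) / (q x / (∑ a, q (a, x.2))) :=
      div_pos (div_pos hpx hpb) (div_pos (hq0 x) hqb)
    have h2 : (2:ℝ) ≤ (p x / (∑ a, p (a, x.2))) / (q x / (∑ a, q (a, x.2))) := by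
      have := (Real.le_logb_iff_rpow_le (by norm_num) hratio).mp hfx
      simpa using this
    have h3 : 2 * (q x / (∑ a, q (a, x.2))) ≤ p x / (∑ a, p (a, x.2)) := by
      rw [le_div_iff₀ (div_pos (hq0 x) hqb)] at h2
      linarith
    have h4 := mul_le_mul_of_nonneg_right h3 hpb.le
    rw [div_mul_cancel₀ _ hpb.ne'] at h4
    have h5 : 2 * (q x / (∑ a, q (a, x.2))) * (∑ a, p (a, x.2)) = 2 * r x := by
      rw [hrdef]; field_simp
    rw [h5] at h4
    linarith
  -- sum over T2 of (p - r) ≤ half of |p - r| sum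
  have hhalf : ∑ x ∈ T2, (p x - r x) ≤ (∑ x, |p x - r x|) / 2 := by
    have h1 : ∑ x ∈ T2, (p x - r x) ≤ ∑ x ∈ T2, max (p x - r x) 0 :=
      Finset.sum_le_sum (fun x _ => le_max_left _ _)
    have h2 : ∑ x ∈ T2, max (p x - r x) 0 ≤ ∑ x : A × B, max (p x - r x) 0 :=
      Finset.sum_le_sum_of_subset_of_nonneg (Finset.subset_univ _)
        (fun x _ _ => le_max_right _ _)
    have h3 : ∑ x : A × B, max (p x - r x) 0 = ((∑ x, (p x - r x)) + ∑ x, |p x - r x|) / 2 := by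
      rw [← Finset.sum_add_distrib, Finset.sum_div]
      apply Finset.sum_congr rfl
      intro x _
      rcases le_total (p x - r x) 0 with h | h
      · rw [max_eq_right h, abs_of_nonpos h]; ring
      · rw [max_eq_left h, abs_of_nonneg h]; ring
    have h4 : ∑ x : A × B, (p x - r x) = 0 := by
      rw [Finset.sum_sub_distrib, hp1, hr1]; ring
    rw [h3, h4] at h2
    linarith
  -- T2 bound
  have hT2bound : ∑ x ∈ T2, p x * f x ≤ 2 * M * ∑ x, |p x - q x| := by
    calc ∑ x ∈ T2, p x * f x ≤ ∑ x ∈ T2, p x * M := by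
          apply Finset.sum_le_sum
          intro x hx
          simp only [hT2, hT, Finset.mem_filter] at hx
          exact mul_le_mul_of_nonneg_left (hfM x hx.1.2) (hp0 x)
      _ = M * ∑ x ∈ T2, p x := by rw [← Finset.sum_mul]; ring
      _ ≤ M * ∑ x ∈ T2, 2 * (p x - r x) :=
          mul_le_mul_of_nonneg_left (Finset.sum_le_sum hkey) hM0
      _ = 2 * M * ∑ x ∈ T2, (p x - r x) := by rw [← Finset.mul_sum]; ring
      _ ≤ 2 * M * ((∑ x, |p x - r x|) / 2) := by
          apply mul_le_mul_of_nonneg_left hhalf (by linarith)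
      _ ≤ 2 * M * ∑ x, |p x - q x| := by
          apply mul_le_mul_of_nonneg_left _ (by linarith)
          linarith
  show ∑ x ∈ T, p x * f x ≤ 2 * M * (∑ x, |p x - q x|) + 1
  rw [hsplit]
  linarith
end

section
/- Let X be a random variable distributed uniformly on a finite set 𝒳 with |𝒳| ≥ 2, and let V be a random variable on the same probability space taking values in a finite set 𝒱. Let δ ≥ 0 be such that for every v ∈ 𝒱 with Pr[V = v] > 0 one has Σ_{x ∈ 𝒳} |Pr[X = x | V = v] − 1/|𝒳|| ≤ δ. Then the mutual information satisfies I(X;V) ≤ 2δ·log₂|𝒳| + 1, and consequently the conditional entropy satisfies H(X | V) ≥ (1 − 2δ)·log₂|𝒳| − 1. -/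
open Finset

/-- The probability of the event `E` under the probability mass function `μ` on a
finite sample space `Ω`. -/
noncomputable def prEvent {Ω : Type*} [Fintype Ω] (μ : Ω → ℝ) (E : Ω → Prop) : ℝ :=
  haveI := Classical.decPred E
  ∑ ω ∈ Finset.univ.filter (fun ω => E ω), μ ω

/-- The Shannon entropy (in bits) of the random variable `X : Ω → 𝒳` under the
probability mass function `μ`.  (Note `Real.logb 2 0 = 0`, so terms with zero
probability contribute `0`.) -/
noncomputable def shannonH {Ω 𝒳 : Type*} [Fintype Ω] [Fintype 𝒳]
    (μ : Ω → ℝ) (X : Ω → 𝒳) : ℝ :=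
  -∑ x : 𝒳, prEvent μ (fun ω => X ω = x) * Real.logb 2 (prEvent μ (fun ω => X ω = x))

/-- The conditional Shannon entropy `H(X | V) = ∑_v Pr[V = v] · H(X | V = v)` (in bits),
where `H(X | V = v) = -∑_x Pr[X = x | V = v] · log₂ Pr[X = x | V = v]` and
`Pr[X = x | V = v] = Pr[X = x, V = v] / Pr[V = v]`. -/
noncomputable def condShannonH {Ω 𝒳 𝒱 : Type*} [Fintype Ω] [Fintype 𝒳] [Fintype 𝒱]
    (μ : Ω → ℝ) (X : Ω → 𝒳) (V : Ω → 𝒱) : ℝ :=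
  ∑ v : 𝒱, prEvent μ (fun ω => V ω = v) *
    (-∑ x : 𝒳,
      (prEvent μ (fun ω => X ω = x ∧ V ω = v) / prEvent μ (fun ω => V ω = v)) *
        Real.logb 2
          (prEvent μ (fun ω => X ω = x ∧ V ω = v) / prEvent μ (fun ω => V ω = v)))

/-!
Write `q_v` for the conditional law of `X` given `V = v`. Since `X` is uniform,
`I(X;V) = ∑_v Pr[V = v] · (log₂ N − H(q_v))`, an average of divergences from the uniform law,
so it suffices to bound `log₂ N − H(q) = ∑_x q(x) log₂ (N q(x))` for a single law `q` that is
`δ`-close to uniform. Pointwise, `q log₂ (N q) ≤ (1 / ln 2 + log₂ N) · (q − 1/N)⁺`, which gives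
the bound `(1 / ln 2 + log₂ N) · δ`; this is at most `2δ log₂ N + 1` when `δ < 1/2`, and for
`δ ≥ 1/2` the trivial bound `log₂ N − H(q) ≤ log₂ N` suffices.
-/

open Real

section Entropy

variable {α : Type*} [Fintype α]

noncomputable def entropyBits (q : α → ℝ) : ℝ :=
  -∑ x, q x * logb 2 (q x)

omit [Fintype α] in
lemma le_one_of_sum_eq_one {q : α → ℝ} (s : Finset α) (hq0 : ∀ x, 0 ≤ q x)
    (hq1 : ∑ x ∈ s, q x = 1) {x : α} (hx : x ∈ s) : q x ≤ 1 :=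
  hq1 ▸ single_le_sum (fun y _ => hq0 y) hx

lemma entropyBits_nonneg {q : α → ℝ} (hq0 : ∀ x, 0 ≤ q x) (hq1 : ∀ x, q x ≤ 1) :
    0 ≤ entropyBits q := by
  rw [entropyBits, neg_nonneg]
  exact sum_nonpos fun x _ =>
    mul_nonpos_of_nonneg_of_nonpos (hq0 x) (logb_nonpos one_lt_two (hq0 x) (hq1 x))

lemma entropyBits_uniform : entropyBits (fun _ : α => 1 / (Fintype.card α : ℝ)) =
    logb 2 (Fintype.card α) := by
  rcases eq_or_ne (Fintype.card α : ℝ) 0 with h | h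
  · simp [entropyBits, h]
  · simp only [entropyBits, sum_const, card_univ, nsmul_eq_mul, one_div, logb_inv]
    field_simp

lemma logb_sub_entropyBits_eq_sum {q : α → ℝ} (hq1 : ∑ x, q x = 1) {N : ℝ} (hN : 0 < N) :
    logb 2 N - entropyBits q = ∑ x, q x * logb 2 (q x * N) := by
  have hterm : ∀ x, q x * logb 2 (q x * N) = q x * logb 2 N + q x * logb 2 (q x) := by
    intro x
    rcases eq_or_ne (q x) 0 with h | h
    · simp [h]
    · rw [logb_mul h hN.ne']
      ring
  rw [sum_congr rfl fun x _ => hterm x, sum_add_distrib, ← sum_mul, hq1, entropyBits]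
  ring

lemma mul_logb_mul_le_mul_max {q N : ℝ} (hq0 : 0 ≤ q) (hq1 : q ≤ 1) (hN : 0 < N) :
    q * logb 2 (q * N) ≤ (1 / log 2 + logb 2 N) * max (q - 1 / N) 0 := by
  rcases le_or_gt q (1 / N) with hsmall | hlarge
  · rw [max_eq_right (by linarith), mul_zero]
    refine mul_nonpos_of_nonneg_of_nonpos hq0 (logb_nonpos one_lt_two (by positivity) ?_)
    calc q * N ≤ 1 / N * N := by gcongr
      _ = 1 := by field_simp
  · rw [max_eq_left (by linarith)]
    have hqN : 0 < q * N := mul_pos ((one_div_pos.2 hN).trans hlarge) hN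
    have hle_logN : logb 2 (q * N) ≤ logb 2 N :=
      logb_le_logb_of_le one_lt_two hqN (by nlinarith)
    have hle_linear : logb 2 (q * N) ≤ (q * N - 1) / log 2 :=
      div_le_div_of_nonneg_right (log_le_sub_one_of_pos hqN) (log_pos one_lt_two).le
    -- split `q = 1/N + (q - 1/N)` and bound `log₂ (qN)` differently on each part
    calc q * logb 2 (q * N) = 1 / N * logb 2 (q * N) + (q - 1 / N) * logb 2 (q * N) := by ring
      _ ≤ 1 / N * ((q * N - 1) / log 2) + (q - 1 / N) * logb 2 N := by gcongr
      _ = (1 / log 2 + logb 2 N) * (q - 1 / N) := by field_simp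

lemma logb_sub_entropyBits_le_mul_sum_abs {q : α → ℝ} (hq0 : ∀ x, 0 ≤ q x)
    (hq1 : ∑ x, q x = 1) {N : ℝ} (hN : 1 ≤ N) :
    logb 2 N - entropyBits q ≤ (1 / log 2 + logb 2 N) * ∑ x, |q x - 1 / N| := by
  have hN0 : 0 < N := one_pos.trans_le hN
  have hC : 0 ≤ 1 / log 2 + logb 2 N := add_nonneg (by positivity) (logb_nonneg one_lt_two hN)
  rw [logb_sub_entropyBits_eq_sum hq1 hN0, mul_sum]
  refine sum_le_sum fun x hx => ?_
  calc q x * logb 2 (q x * N)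
      ≤ (1 / log 2 + logb 2 N) * max (q x - 1 / N) 0 :=
        mul_logb_mul_le_mul_max (hq0 x) (le_one_of_sum_eq_one univ hq0 hq1 hx) hN0
    _ ≤ (1 / log 2 + logb 2 N) * |q x - 1 / N| := by
        gcongr
        exact max_le (le_abs_self _) (abs_nonneg _)

lemma logb_sub_entropyBits_le {q : α → ℝ} (hq0 : ∀ x, 0 ≤ q x) (hq1 : ∑ x, q x = 1)
    {N δ : ℝ} (hN : 1 ≤ N) (hqδ : ∑ x, |q x - 1 / N| ≤ δ) :
    logb 2 N - entropyBits q ≤ 2 * δ * logb 2 N + 1 := by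
  have hlogN : 0 ≤ logb 2 N := logb_nonneg one_lt_two hN
  have hδ : 0 ≤ δ := (sum_nonneg fun _ _ => abs_nonneg _).trans hqδ
  rcases lt_or_ge δ (1 / 2) with hsmall | hlarge
  · have hδ_div : δ / log 2 ≤ 1 :=
      (div_le_one (log_pos one_lt_two)).2 (by linarith [log_two_gt_d9])
    calc logb 2 N - entropyBits q ≤ (1 / log 2 + logb 2 N) * ∑ x, |q x - 1 / N| :=
          logb_sub_entropyBits_le_mul_sum_abs hq0 hq1 hN
      _ ≤ (1 / log 2 + logb 2 N) * δ := by gcongr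
      _ ≤ 2 * δ * logb 2 N + 1 := by
          rw [add_mul, one_div_mul_eq_div]
          nlinarith
  · have := entropyBits_nonneg hq0 fun x => le_one_of_sum_eq_one univ hq0 hq1 (mem_univ x)
    nlinarith

end Entropy

lemma sub_sum_mul_le_of_forall_pos {ι : Type*} [Fintype ι] {p f : ι → ℝ} (hp0 : ∀ i, 0 ≤ p i)
    (hp1 : ∑ i, p i = 1) {c B : ℝ} (h : ∀ i, 0 < p i → c - f i ≤ B) :
    c - ∑ i, p i * f i ≤ B :=
  calc c - ∑ i, p i * f i = ∑ i, p i * (c - f i) := by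
        simp only [mul_sub, sum_sub_distrib, ← sum_mul, hp1, one_mul]
    _ ≤ ∑ i, p i * B := sum_le_sum fun i _ => (hp0 i).eq_or_lt.elim
        (fun h0 => by simp [← h0]) (fun hpos => mul_le_mul_of_nonneg_left (h i hpos) hpos.le)
    _ = B := by rw [← sum_mul, hp1, one_mul]

section Probability

variable {Ω α : Type*} [Fintype Ω]

lemma prEvent_nonneg {μ : Ω → ℝ} (hμ0 : ∀ ω, 0 ≤ μ ω) (E : Ω → Prop) : 0 ≤ prEvent μ E :=
  sum_nonneg fun ω _ => hμ0 ω

lemma prEvent_eq_sum_ite (μ : Ω → ℝ) (E : Ω → Prop) [DecidablePred E] :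
    prEvent μ E = ∑ ω, if E ω then μ ω else 0 := by
  rw [prEvent, sum_filter]
  congr!

variable [Fintype α]

lemma sum_prEvent_eq_and (μ : Ω → ℝ) (X : Ω → α) (E : Ω → Prop) :
    ∑ x, prEvent μ (fun ω => X ω = x ∧ E ω) = prEvent μ E := by
  classical
  simp only [prEvent_eq_sum_ite]
  rw [sum_comm]
  refine sum_congr rfl fun ω _ => ?_
  by_cases hE : E ω <;> simp [hE]

lemma sum_prEvent_eq (μ : Ω → ℝ) (X : Ω → α) :
    ∑ x, prEvent μ (fun ω => X ω = x) = ∑ ω, μ ω := by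
  classical
  simp only [prEvent_eq_sum_ite]
  rw [sum_comm]
  simp

lemma sum_prEvent_and_div_eq_one (μ : Ω → ℝ) (X : Ω → α) {E : Ω → Prop}
    (hE : 0 < prEvent μ E) :
    ∑ x, prEvent μ (fun ω => X ω = x ∧ E ω) / prEvent μ E = 1 := by
  rw [← sum_div, sum_prEvent_eq_and, div_self hE.ne']

end Probability

theorem mutualInfo_le_of_statistically_close_general {Ω 𝒳 𝒱 : Type*}
    [Fintype Ω] [Fintype 𝒳] [Fintype 𝒱]
    (μ : Ω → ℝ) (hμ0 : ∀ ω, 0 ≤ μ ω) (hμ1 : ∑ ω, μ ω = 1)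
    (X : Ω → 𝒳) (V : Ω → 𝒱)
    (hcard : 2 ≤ Fintype.card 𝒳)
    (hunif : ∀ x : 𝒳, prEvent μ (fun ω => X ω = x) = 1 / (Fintype.card 𝒳 : ℝ))
    (δ : ℝ)
    (hstat : ∀ v : 𝒱, 0 < prEvent μ (fun ω => V ω = v) →
      ∑ x : 𝒳,
        |prEvent μ (fun ω => X ω = x ∧ V ω = v) / prEvent μ (fun ω => V ω = v)
          - 1 / (Fintype.card 𝒳 : ℝ)| ≤ δ) :
    shannonH μ X - condShannonH μ X V ≤ 2 * δ * Real.logb 2 (Fintype.card 𝒳) + 1 ∧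
    (1 - 2 * δ) * Real.logb 2 (Fintype.card 𝒳) - 1 ≤ condShannonH μ X V := by
  have hN : (1 : ℝ) ≤ Fintype.card 𝒳 := by exact_mod_cast one_le_two.trans hcard
  have hHX : shannonH μ X = logb 2 (Fintype.card 𝒳) := by
    rw [← entropyBits_uniform, ← funext hunif]
    rfl
  have hI : shannonH μ X - condShannonH μ X V ≤ 2 * δ * logb 2 (Fintype.card 𝒳) + 1 := by
    rw [hHX]
    refine sub_sum_mul_le_of_forall_pos (fun v => prEvent_nonneg hμ0 _)
      ((sum_prEvent_eq μ V).trans hμ1) fun v hv => ?_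
    exact logb_sub_entropyBits_le (fun x => div_nonneg (prEvent_nonneg hμ0 _) hv.le)
      (sum_prEvent_and_div_eq_one μ X hv) hN (hstat v hv)
  refine ⟨hI, ?_⟩
  rw [hHX] at hI
  linarith

/-- If `X` is uniform on `𝒳` (with `|𝒳| ≥ 2`) and, conditioned on every outcome `v` of `V`
of positive probability, the conditional distribution of `X` is `δ`-close in ℓ1-distance
to uniform, then `I(X;V) = H(X) − H(X|V) ≤ 2δ·log₂|𝒳| + 1`, and consequently
`H(X|V) ≥ (1 − 2δ)·log₂|𝒳| − 1`. -/
theorem mutualInfo_le_of_statistically_close {Ω 𝒳 𝒱 : Type*}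
    [Fintype Ω] [Fintype 𝒳] [Fintype 𝒱]
    (μ : Ω → ℝ) (hμ0 : ∀ ω, 0 ≤ μ ω) (hμ1 : ∑ ω, μ ω = 1)
    (X : Ω → 𝒳) (V : Ω → 𝒱)
    (hcard : 2 ≤ Fintype.card 𝒳)
    (hunif : ∀ x : 𝒳, prEvent μ (fun ω => X ω = x) = 1 / (Fintype.card 𝒳 : ℝ))
    (δ : ℝ) (hδ : 0 ≤ δ)
    (hstat : ∀ v : 𝒱, 0 < prEvent μ (fun ω => V ω = v) →
      ∑ x : 𝒳,
        |prEvent μ (fun ω => X ω = x ∧ V ω = v) / prEvent μ (fun ω => V ω = v)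
          - 1 / (Fintype.card 𝒳 : ℝ)| ≤ δ) :
    shannonH μ X - condShannonH μ X V ≤ 2 * δ * Real.logb 2 (Fintype.card 𝒳) + 1 ∧
    (1 - 2 * δ) * Real.logb 2 (Fintype.card 𝒳) - 1 ≤ condShannonH μ X V :=
  mutualInfo_le_of_statistically_close_general μ hμ0 hμ1 X V hcard hunif δ hstat
end

section
/- Let C be a finite set of size N ≥ 1, let Q be a finite set, let t ≥ 0 and s be integers with 2t ≤ s ≤ N, and let P be a function assigning to each q ∈ Q a subset P(q) ⊆ C with |P(q)| ≤ 2t. Then there exists a subset T ⊆ C with |T| = s such that the number of q ∈ Q with P(q) ⊆ T is at least ((s − 2t)/N)^{2t} · |Q|. -/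
/-!
Average over all `s`-subsets `T` of `C`. A fixed set `A` with `|A| = k ≤ 2t` lies in a
`C(N - k, s - k) / C(N, s) = ∏_{i<k} (s - i)/(N - i)` fraction of them, and each factor is at
least `(s - 2t)/N`. Double counting the pairs `(q, T)` with `P q ⊆ T` then shows that on average,
hence for some `T`, at least a `((s - 2t)/N)^{2t}` fraction of `Q` is resolved.
-/

open Finset

namespace Nat

theorem choose_sub_mul_descFactorial {N s k : ℕ} (hks : k ≤ s) :
    (N - k).choose (s - k) * N.descFactorial k = N.choose s * s.descFactorial k := by
  rw [descFactorial_eq_factorial_mul_choose, descFactorial_eq_factorial_mul_choose,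
    mul_comm ((N - k).choose _), mul_assoc, ← choose_mul hks]
  ring

theorem pow_mul_descFactorial_le {N s m k : ℕ} (hkm : k ≤ m) (hms : m ≤ s) (hsN : s ≤ N) :
    (((s : ℝ) - m) / N) ^ k * N.descFactorial k ≤ s.descFactorial k := by
  induction k with
  | zero => simp
  | succ k ih =>
    have hk : k < m := hkm
    have hfactor : ((s : ℝ) - m) / N * (N - k : ℕ) ≤ (s - k : ℕ) := by
      have hkN : (k : ℝ) < N := by exact_mod_cast hk.trans_le (hms.trans hsN)
      rw [Nat.cast_sub (by omega), Nat.cast_sub (by omega), div_mul_eq_mul_div,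
        div_le_iff₀ (by linarith)]
      have : (k : ℝ) < m := by exact_mod_cast hk
      have : (m : ℝ) ≤ s := by exact_mod_cast hms
      have : (s : ℝ) ≤ N := by exact_mod_cast hsN
      -- equivalent to `k (N - s) ≤ m (N - k)`
      nlinarith
    have hbase : 0 ≤ ((s : ℝ) - m) / N :=
      div_nonneg (sub_nonneg.mpr (by exact_mod_cast hms)) N.cast_nonneg
    rw [descFactorial_succ, descFactorial_succ, pow_succ, Nat.cast_mul, Nat.cast_mul]
    calc (((s : ℝ) - m) / N) ^ k * ((s - m) / N) * ((N - k : ℕ) * N.descFactorial k)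
        = ((s - m) / N * (N - k : ℕ)) * ((((s : ℝ) - m) / N) ^ k * N.descFactorial k) := by ring
      _ ≤ (s - k : ℕ) * s.descFactorial k :=
        mul_le_mul hfactor (ih hk.le) (mul_nonneg (pow_nonneg hbase k) (Nat.cast_nonneg _))
          (Nat.cast_nonneg _)

theorem pow_mul_choose_le_choose_sub {N s m k : ℕ} (hkm : k ≤ m) (hms : m ≤ s) (hsN : s ≤ N) :
    (((s : ℝ) - m) / N) ^ m * N.choose s ≤ (N - k).choose (s - k) := by
  have hdesc : (0 : ℝ) < N.descFactorial k := by exact_mod_cast descFactorial_pos.mpr (by omega)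
  have hbase : 0 ≤ ((s : ℝ) - m) / N :=
    div_nonneg (sub_nonneg.mpr (by exact_mod_cast hms)) N.cast_nonneg
  have hbase_le_one : ((s : ℝ) - m) / N ≤ 1 :=
    div_le_one_of_le₀ (by linarith [(Nat.cast_le (α := ℝ)).mpr hsN, m.cast_nonneg (α := ℝ)])
      N.cast_nonneg
  rw [← mul_le_mul_iff_of_pos_right hdesc]
  calc (((s : ℝ) - m) / N) ^ m * N.choose s * N.descFactorial k
      ≤ N.choose s * ((((s : ℝ) - m) / N) ^ k * N.descFactorial k) := by
        rw [mul_comm _ (N.choose s : ℝ), mul_assoc]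
        gcongr _ * (?_ * _)
        exact pow_le_pow_of_le_one hbase hbase_le_one hkm
    _ ≤ N.choose s * s.descFactorial k := by gcongr; exact pow_mul_descFactorial_le hkm hms hsN
    _ = (N - k).choose (s - k) * N.descFactorial k := by
        exact_mod_cast (choose_sub_mul_descFactorial (hkm.trans hms)).symm

end Nat

namespace Finset

theorem exists_mul_card_le_card_bipartiteBelow {α β R : Type*} [CommSemiring R]
    [LinearOrder R] [IsStrictOrderedRing R] (r : α → β → Prop) [∀ a b, Decidable (r a b)]
    {s : Finset α} {t : Finset β} (ht : t.Nonempty) {c : R}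
    (h : ∀ a ∈ s, c * #t ≤ #(t.bipartiteAbove r a)) :
    ∃ b ∈ t, c * #s ≤ #(s.bipartiteBelow r b) := by
  by_contra! H
  have := card_nsmul_lt_card_nsmul_of_le_of_lt r ht h H
  simp only [nsmul_eq_mul] at this
  exact this.ne (by ring)

theorem pow_mul_card_powersetCard_le_card_filter_subset {α : Type*} [DecidableEq α]
    {A u : Finset α} {m s : ℕ} (hAu : A ⊆ u) (hAm : #A ≤ m) (hms : m ≤ s) (hsu : s ≤ #u) :
    (((s : ℝ) - m) / #u) ^ m * #(u.powersetCard s) ≤ #{T ∈ u.powersetCard s | A ⊆ T} := by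
  rw [card_powersetCard, card_filter_powersetCard_subset A u s hAu (hAm.trans hms)]
  exact Nat.pow_mul_choose_le_choose_sub hAm hms hsu

end Finset

theorem cell_sampling_general {C Q : Type*} [Fintype C] [DecidableEq C] [Fintype Q]
    (t s : ℕ)
    (hts : 2 * t ≤ s) (hsN : s ≤ Fintype.card C)
    (P : Q → Finset C) (hP : ∀ q : Q, (P q).card ≤ 2 * t) :
    ∃ T : Finset C, T.card = s ∧
      (((s : ℝ) - 2 * t) / (Fintype.card C : ℝ)) ^ (2 * t) * (Fintype.card Q : ℝ) ≤
        ((Finset.univ.filter (fun q : Q => P q ⊆ T)).card : ℝ) := by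
  have hsu : s ≤ #(univ : Finset C) := by rwa [card_univ]
  obtain ⟨T, hT, hresolved⟩ := exists_mul_card_le_card_bipartiteBelow (fun q T => P q ⊆ T)
    (s := univ) (powersetCard_nonempty.mpr hsu) fun q _ => by
      have := pow_mul_card_powersetCard_le_card_filter_subset (subset_univ (P q)) (hP q) hts hsu
      rwa [card_univ, Nat.cast_mul, Nat.cast_ofNat] at this
  rw [card_univ] at hresolved
  exact ⟨T, (mem_powersetCard.mp hT).2, hresolved⟩

/-- **Cell sampling.** Let `C` be a finite set of size `N ≥ 1`, `Q` a finite set,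
`t, s` with `2t ≤ s ≤ N`, and `P : Q → Finset C` with `|P(q)| ≤ 2t` for every `q`.
Then some subset `T ⊆ C` with `|T| = s` satisfies
`#{q : P(q) ⊆ T} ≥ ((s − 2t)/N)^{2t} · |Q|`. -/
theorem cell_sampling {C Q : Type*} [Fintype C] [DecidableEq C] [Fintype Q]
    (hN : 1 ≤ Fintype.card C) (t s : ℕ)
    (hts : 2 * t ≤ s) (hsN : s ≤ Fintype.card C)
    (P : Q → Finset C) (hP : ∀ q : Q, (P q).card ≤ 2 * t) :
    ∃ T : Finset C, T.card = s ∧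
      (((s : ℝ) - 2 * t) / (Fintype.card C : ℝ)) ^ (2 * t) * (Fintype.card Q : ℝ) ≤
        ((Finset.univ.filter (fun q : Q => P q ⊆ T)).card : ℝ) :=
  cell_sampling_general t s hts hsN P hP
end
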